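/- arXiv:1410.5583 — 6 statements merged into one kernel-verified Lean document; each statement's English description precedes it below -/
import Mathlib

section
/- If a preordered set P has a μ-set (a complete set whose elements are pairwise incomparable), then any two μ-sets of P have the same cardinality. -/
/-- A subset `M` of a preordered set is complete if every element lies below some member of `M`. -/
def MuComplete {P : Type*} [Preorder P] (M : Set P) : Prop :=
  ∀ x : P, ∃ y ∈ M, x ≤ y

/-- A μ-set is a complete set whose elements are pairwise incomparable. -/
def MuSet {P : Type*} [Preorder P] (M : Set P) : Prop :=
  MuComplete M ∧ ∀ x ∈ M, ∀ y ∈ M, x ≠ y → ¬ x ≤ y ∧ ¬ y ≤ x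

lemma muSets_card_le {P : Type*} [Preorder P] (M₁ M₂ : Set P)
    (h₁ : MuSet M₁) (h₂ : MuSet M₂) :
    Cardinal.mk M₁ ≤ Cardinal.mk M₂ := by
  choose f hfM hfle using fun x : M₁ => h₂.1 (x : P)
  refine Cardinal.mk_le_of_injective (f := fun x => ⟨f x, hfM x⟩) ?_
  intro x₁ x₂ h
  have hfx : f x₁ = f x₂ := congrArg Subtype.val h
  obtain ⟨z, hz, hzle⟩ := h₁.1 (f x₁)
  have e₁ : (x₁ : P) = z := by
    by_contra hne
    exact (h₁.2 x₁ x₁.2 z hz hne).1 (le_trans (hfle x₁) hzle)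
  have e₂ : (x₂ : P) = z := by
    by_contra hne
    exact (h₁.2 x₂ x₂.2 z hz hne).1 (le_trans (hfle x₂) (hfx ▸ hzle))
  exact Subtype.ext (e₁.trans e₂.symm)

/-- Any two μ-sets of a preordered set have the same cardinality. -/
theorem muSets_same_card {P : Type*} [Preorder P] (M₁ M₂ : Set P)
    (h₁ : MuSet M₁) (h₂ : MuSet M₂) :
    Cardinal.mk M₁ = Cardinal.mk M₂ := by
  exact le_antisymm (muSets_card_le M₁ M₂ h₁ h₂) (muSets_card_le M₂ M₁ h₂ h₁)
end

section
/- Let P be a preorder on a set and suppose P is equivalent (as a preordered set) to the poset of a finite family of subsets of a finite set ordered by reverse inclusion. Then P has a finite μ-set. Consequently, if A is a finite algebra, the preordered set of coexact unifiers of A, which is equivalent to (Con_e(A), ⊇) where Con_e(A) is a set of congruences on A, has a μ-set of cardinality at most 2^{|A|²}; hence its type is unitary or finitary. -/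
def MuCompleteR {P : Type*} (le : P → P → Prop) (M : Set P) : Prop :=
  ∀ x : P, ∃ y ∈ M, le x y

def MuSetR {P : Type*} (le : P → P → Prop) (M : Set P) : Prop :=
  MuCompleteR le M ∧ ∀ x ∈ M, ∀ y ∈ M, x ≠ y → ¬ le x y ∧ ¬ le y x

/-!
Since `p ≤ q ↔ e q ⊆ e p`, the preorder `P` is, up to equivalence, the finite family
`{e p}` of subsets of `X` under reverse inclusion. One representative of each minimal set
of this family gives a finite μ-set. Conversely the members of any μ-set are pairwise
incomparable, so `e` is injective on it, which bounds its size by `|Set X| = 2 ^ |X|`.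
-/

lemma muSetR_iff {P : Type*} {le : P → P → Prop} {M : Set P} :
    MuSetR le M ↔ MuCompleteR le M ∧ IsAntichain le M :=
  and_congr_right fun _ ↦
    ⟨fun h _ hx _ hy hxy ↦ (h _ hx _ hy hxy).1,
      fun h _ hx _ hy hxy ↦ ⟨h hx hy hxy, h hy hx hxy.symm⟩⟩

section OrderReflecting

variable {P β : Type*} [Preorder P] [PartialOrder β] {f : P → β}

lemma injOn_of_isAntichain (hf : ∀ p q, f p ≤ f q ↔ p ≤ q) {M : Set P}
    (hM : IsAntichain (· ≤ ·) M) : Set.InjOn f M :=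
  fun _ hp _ hq hpq ↦ hM.eq hp hq ((hf _ _).1 hpq.le)

lemma exists_finite_muSetR_of_finite_range (hf : ∀ p q, f p ≤ f q ↔ p ≤ q)
    (hfin : (Set.range f).Finite) : ∃ M : Set P, M.Finite ∧ MuSetR (· ≤ ·) M := by
  let S := {b | Maximal (· ∈ Set.range f) b}
  have hS : S.Finite := hfin.subset fun _ hb ↦ hb.prop
  have : Finite S := hS.to_subtype
  let g : S → P := fun b ↦ b.2.prop.choose
  have hg (b : S) : f (g b) = b := b.2.prop.choose_spec
  refine ⟨Set.range g, Set.finite_range g, muSetR_iff.2 ⟨?_, ?_⟩⟩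
  · intro x
    obtain ⟨b, hxb, hb⟩ := hfin.exists_le_maximal (Set.mem_range_self x)
    exact ⟨g ⟨b, hb⟩, Set.mem_range_self _, (hf _ _).1 (by rwa [hg])⟩
  · rintro _ ⟨b, rfl⟩ _ ⟨b', rfl⟩ hne hle
    rw [← hf, hg, hg] at hle
    exact hne (congrArg g (Subtype.ext (b.2.eq_of_le b'.2.prop hle)))

end OrderReflecting

theorem finite_muSet_of_equiv_finite_family_general {P : Type*} [Preorder P]
    {X : Type*} [Finite X] (F : Set (Set X)) (e : P → F)
    (h2 : ∀ p₁ p₂ : P, p₁ ≤ p₂ ↔ (e p₂ : Set X) ⊆ (e p₁ : Set X)) :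
    (∃ M : Set P, M.Finite ∧ MuSetR (· ≤ ·) M) ∧
      (∀ M : Set P, MuSetR (· ≤ ·) M → M.Finite ∧ Nat.card M ≤ 2 ^ (Nat.card X)) := by
  let f : P → (Set X)ᵒᵈ := fun p ↦ OrderDual.toDual (e p : Set X)
  have hf (p q : P) : f p ≤ f q ↔ p ≤ q := (h2 p q).symm
  refine ⟨exists_finite_muSetR_of_finite_range hf (Set.toFinite _), fun M hM ↦ ?_⟩
  have hinj := injOn_of_isAntichain hf (muSetR_iff.1 hM).2
  refine ⟨Set.Finite.of_finite_image (Set.toFinite _) hinj, ?_⟩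
  have := Fintype.ofFinite X
  calc Nat.card M ≤ Nat.card (Set X)ᵒᵈ :=
        Nat.card_le_card_of_injective _ (Set.injOn_iff_injective.1 hinj)
    _ = 2 ^ Nat.card X := by simp [Nat.card_eq_fintype_card, Fintype.card_set]

/-- A preorder equivalent to a finite family of subsets of a finite set ordered by
reverse inclusion has a finite μ-set; in the application `P` is the preordered set of
coexact unifiers of a finite algebra `A`, the finite set is `A × A`, the family is
`Con_e(A)`, and the μ-set has cardinality at most `2^(|A|²)`. -/
theorem finite_muSet_of_equiv_finite_family {P : Type*} [Preorder P]
    {X : Type*} [Finite X] (F : Set (Set X)) (e : P → F)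
    (h1 : ∀ q : F, ∃ p : P, (q : Set X) ⊆ (e p : Set X) ∧ (e p : Set X) ⊆ (q : Set X))
    (h2 : ∀ p₁ p₂ : P, p₁ ≤ p₂ ↔ (e p₂ : Set X) ⊆ (e p₁ : Set X)) :
    (∃ M : Set P, M.Finite ∧ MuSetR (· ≤ ·) M) ∧
      (∀ M : Set P, MuSetR (· ≤ ·) M → M.Finite ∧ Nat.card M ≤ 2 ^ (Nat.card X)) :=
  finite_muSet_of_equiv_finite_family_general F e h2
end

section
/- Let S be a family of equivalence relations on a set, preordered by reverse inclusion. Then the μ-sets of S (if any) are exactly the sets of minimal elements of S under ⊆ that are also complete; consequently the type of S is: 1 if S has exactly one minimal element below every element; ω if it has finitely many (>1) such minimal elements forming a complete set; ∞ if infinitely many; and 0 if the set of minimal elements is not complete. -/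
/-- For a family `S` of equivalence relations preordered by reverse inclusion, the μ-sets
are exactly the complete sets consisting of all ⊆-minimal elements of `S`; hence the type
of `S` is determined by the cardinality of the set of minimal elements and whether
it is complete. -/
theorem muSet_iff_minimal {A : Type*} (S : Set (Set (A × A)))
    (hequiv : ∀ θ ∈ S, Equivalence (fun a b : A => (a, b) ∈ θ)) :
    ∀ M : Set ↥S,
      MuSetR (fun a b : ↥S => (b : Set (A × A)) ⊆ (a : Set (A × A))) M ↔
        (M = {m : ↥S | ∀ x : ↥S, (x : Set (A × A)) ⊆ (m : Set (A × A)) → x = m} ∧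
          MuCompleteR (fun a b : ↥S => (b : Set (A × A)) ⊆ (a : Set (A × A))) M) := by
  intro M
  constructor
  · rintro ⟨hc, ha⟩
    refine ⟨?_, hc⟩
    ext m
    constructor
    · intro hm x hxm
      obtain ⟨y, hy, hyx⟩ := hc x
      have hym : y = m := by
        by_contra hne
        exact (ha y hy m hm hne).2 (hyx.trans hxm)
      subst hym
      exact Subtype.coe_injective (subset_antisymm hxm hyx)
    · intro hmin
      obtain ⟨y, hy, hym⟩ := hc m
      rwa [hmin y hym] at hy
  · rintro ⟨hM, hc⟩
    refine ⟨hc, ?_⟩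
    intro x hx y hy hne
    subst hM
    exact ⟨fun h => hne ((hx y h).symm), fun h => hne (hy x h)⟩
end

section
/- In the free commutative monoid setting: for each pair (m, n) with gcd(m, n) = 1, the substitution σ_{m,n}(x) = z^m, σ_{m,n}(y) = z^n is a unifier of the semigroup identity x·y ≈ y·x, and for distinct coprime pairs (m,n) ≠ (m',n'), neither σ_{m,n} ≼ σ_{m',n'} nor σ_{m',n'} ≼ σ_{m,n} holds in the variety of semigroups. -/
/-- `spow a n = a^(n+1)` in a free semigroup. -/
def spow (a : FreeSemigroup ℕ) : ℕ → FreeSemigroup ℕ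
  | 0 => a
  | n + 1 => spow a n * a

/-- The word `z^m` (for `m ≥ 1`) in the free semigroup, with `z` the variable `0`. -/
def zp (m : ℕ) : FreeSemigroup ℕ := spow (FreeSemigroup.of 0) (m - 1)

lemma spow_mul_spow (a : FreeSemigroup ℕ) (i j : ℕ) :
    spow a i * spow a j = spow a (i + j + 1) := by
  induction j with
  | zero => rfl
  | succ j ih => show spow a i * (spow a j * a) = _
                 rw [← mul_assoc, ih]; rfl

lemma lift_spow (σ : ℕ → FreeSemigroup ℕ) (a : FreeSemigroup ℕ) (k : ℕ) :
    FreeSemigroup.lift σ (spow a k) = spow (FreeSemigroup.lift σ a) k := by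
  induction k with
  | zero => rfl
  | succ k ih => show FreeSemigroup.lift σ (spow a k * a) = _
                 rw [map_mul, ih]; rfl

lemma length_spow (a : FreeSemigroup ℕ) (k : ℕ) :
    (spow a k).length = (k + 1) * a.length := by
  induction k with
  | zero => simp [spow]
  | succ k ih => show (spow a k * a).length = _
                 rw [FreeSemigroup.length_mul, ih]; ring

lemma length_zp (m : ℕ) (hm : 0 < m) : (zp m).length = m := by
  rw [zp, length_spow, FreeSemigroup.length_of, Nat.sub_add_cancel hm, mul_one]

lemma no_subst (m n m' n' : ℕ) (hm : 0 < m) (hn : 0 < n) (hm' : 0 < m') (hn' : 0 < n')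
    (hcop : Nat.gcd m n = 1) (hcop' : Nat.gcd m' n' = 1) (hne : (m, n) ≠ (m', n')) :
    ¬ ∃ σ' : ℕ → FreeSemigroup ℕ,
        FreeSemigroup.lift σ' (zp m) = zp m' ∧ FreeSemigroup.lift σ' (zp n) = zp n' := by
  rintro ⟨σ', h1, h2⟩
  set L := (FreeSemigroup.lift σ' (FreeSemigroup.of 0)).length with hL
  have e1 : m * L = m' := by
    have := congrArg FreeSemigroup.length h1
    rwa [zp, lift_spow, length_spow, length_zp m' hm', ← hL,
      Nat.sub_add_cancel hm] at this
  have e2 : n * L = n' := by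
    have := congrArg FreeSemigroup.length h2
    rwa [zp, lift_spow, length_spow, length_zp n' hn', ← hL,
      Nat.sub_add_cancel hn] at this
  have hLg : L = 1 := by
    have : Nat.gcd (m * L) (n * L) = Nat.gcd m n * L := Nat.gcd_mul_right m L n
    rw [e1, e2, hcop', hcop, one_mul] at this
    omega
  apply hne
  rw [hLg, mul_one] at e1 e2
  simp [e1, e2]

/-- For coprime `(m, n)`, the substitution `x ↦ z^m, y ↦ z^n` unifies `x·y ≈ y·x` in the
variety of semigroups, and for distinct coprime pairs the corresponding unifiers are
incomparable in the instantiation preorder. -/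
theorem semigroup_muSet_incomparable (m n : ℕ) (hm : 0 < m) (hn : 0 < n)
    (hcop : Nat.gcd m n = 1) :
    zp m * zp n = zp n * zp m ∧
      ∀ m' n' : ℕ, 0 < m' → 0 < n' → Nat.gcd m' n' = 1 → (m, n) ≠ (m', n') →
        (¬ ∃ σ' : ℕ → FreeSemigroup ℕ,
            FreeSemigroup.lift σ' (zp m) = zp m' ∧ FreeSemigroup.lift σ' (zp n) = zp n') ∧
        (¬ ∃ σ' : ℕ → FreeSemigroup ℕ,
            FreeSemigroup.lift σ' (zp m') = zp m ∧ FreeSemigroup.lift σ' (zp n') = zp n) := by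
  constructor
  · rw [zp, zp, spow_mul_spow, spow_mul_spow, Nat.add_comm (m-1)]
  · intro m' n' hm' hn' hcop' hne
    exact ⟨no_subst m n m' n' hm hn hm' hn' hcop hcop' hne,
      no_subst m' n' m n hm' hn' hm hn hcop' hcop (fun h => hne (by
        simpa using h.symm))⟩
end

section
/- Let V be an equational class, Σ a finite set of identities, and suppose S = {σ₁, …, σₙ} is a finite μ-set for the set of V-unifiers of Σ preordered by ⊑ (σ ⊑ τ iff ker(h_V ∘ τ) ⊆ ker(h_V ∘ σ)). If the clause Σ ⇒ Δ is V-admissible, then there exists Δ' ⊆ Δ with |Δ'| ≤ n such that Σ ⇒ Δ' is V-admissible. -/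
/-- If `Sig ⇒ Δ` is admissible and the unifiers of `Sig` have a finite μ-set of size `n`
under the kernel-inclusion preorder, then some `Δ' ⊆ Δ` of size at most `n`
already gives an admissible clause `Sig ⇒ Δ'`. -/
theorem admissible_reduct {U I : Type*} (K : U → Set I) (Sig Δ : Set I)
    (hU : ∀ u : U, Sig ⊆ K u)
    (n : ℕ) (σ : Fin n → U)
    (hcomplete : ∀ u : U, ∃ i : Fin n, K (σ i) ⊆ K u)
    (hantichain : ∀ i j : Fin n, i ≠ j → ¬ K (σ i) ⊆ K (σ j))
    (hadm : ∀ u : U, (K u ∩ Δ).Nonempty) :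
    ∃ Δ' ⊆ Δ, Δ'.Finite ∧ Δ'.ncard ≤ n ∧ ∀ u : U, (K u ∩ Δ').Nonempty := by
  choose d hd using fun i : Fin n => hadm (σ i)
  refine ⟨Set.range d, ?_, Set.finite_range d, ?_, ?_⟩
  · rintro _ ⟨i, rfl⟩; exact (hd i).2
  · exact le_trans (Set.ncard_le_ncard (Set.range_subset_iff.2 fun i => Set.mem_image_of_mem d (Set.mem_univ i)) ((Set.finite_univ).image d)) (le_trans (Set.ncard_image_le Set.finite_univ) (le_of_eq (by simp [Set.ncard_univ])))
  · intro u
    obtain ⟨i, hi⟩ := hcomplete u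
    exact ⟨d i, hi (hd i).1, ⟨i, rfl⟩⟩
end

section
/- Converse direction: in the abstract setting with kernels K : U → Set(I), suppose {u₁, …, uₙ} is a finite μ-set for the preorder u ≤ v iff K(v) ⊆ K(u), with n ≥ 2, and suppose for all i ≠ j there exists d_{ij} ∈ K(u_i) \ K(u_j). Then the set Δ = {d_{ij} : i ≠ j} witnesses that admissible reducibility fails: Σ₀ ⇒ Δ is admissible, but Σ₀ ⇒ {d} is not admissible for any single d ∈ Δ. -/
/-- If the unifiers of `Sig` have a finite μ-set of size `n ≥ 2`, witnessed by elements
`d i j ∈ K (σ i) \ K (σ j)`, then admissible reducibility fails: the clause with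
conclusions `Δ = {d i j : i ≠ j}` is admissible but no single-conclusion subclause is. -/
theorem not_admissibly_reducible {U I : Type*} (K : U → Set I) (Sig : Set I)
    (hU : ∀ u : U, Sig ⊆ K u)
    (n : ℕ) (hn : 2 ≤ n) (σ : Fin n → U)
    (hcomplete : ∀ u : U, ∃ i : Fin n, K (σ i) ⊆ K u)
    (hantichain : ∀ i j : Fin n, i ≠ j → ¬ K (σ i) ⊆ K (σ j))
    (d : Fin n → Fin n → I)
    (hd : ∀ i j : Fin n, i ≠ j → d i j ∈ K (σ i) \ K (σ j)) :
    (∀ u : U, (K u ∩ {x | ∃ i j : Fin n, i ≠ j ∧ x = d i j}).Nonempty) ∧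
      ∀ x ∈ {x | ∃ i j : Fin n, i ≠ j ∧ x = d i j}, ¬ (∀ u : U, x ∈ K u) := by
  haveI : Nontrivial (Fin n) := Fin.nontrivial_iff_two_le.mpr hn
  constructor
  · intro u
    obtain ⟨i, hi⟩ := hcomplete u
    obtain ⟨j, hj⟩ := exists_ne i
    exact ⟨d i j, hi (hd i j (Ne.symm hj)).1, i, j, Ne.symm hj, rfl⟩
  · rintro x ⟨i, j, hij, rfl⟩ h
    exact (hd i j hij).2 (h (σ j))
end
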